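/- arXiv:1008.5249 — 3 statements merged into one kernel-verified Lean document; each statement's English description precedes it below -/
import Mathlib

section
/- Let α be a flow on a unital Banach algebra B with generator δ, let P ∈ B, and let u^P be the differentiable α-cocycle with (d/dt)u^P_t|_{t=0} = iP. Define β_t(A) = u^P_t·α_t(A)·(u^P_t)⁻¹. Then the generator δ̃ of the flow β has domain D(δ̃) = D(δ) and satisfies δ̃(A) = δ(A) + i(PA − AP) for all A ∈ D(δ). -/
open Filter Topology


lemma key_conj {B : Type*} [NormedRing B] [NormedAlgebra ℂ B]
    (v w f : ℝ → B) (A M N L : B)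
    (hv : Tendsto (fun t : ℝ => (t : ℝ)⁻¹ • (v t - 1)) (𝓝[≠] 0) (𝓝 M))
    (hw : Tendsto (fun t : ℝ => (t : ℝ)⁻¹ • (w t - 1)) (𝓝[≠] 0) (𝓝 N))
    (hf : Tendsto (fun t : ℝ => (t : ℝ)⁻¹ • (f t - A)) (𝓝[≠] 0) (𝓝 L)) :
    Tendsto (fun t : ℝ => (t : ℝ)⁻¹ • (v t * f t * w t - A)) (𝓝[≠] 0)
      (𝓝 (L + M * A + A * N)) := by
  have hid : Tendsto (fun t : ℝ => t) (𝓝[≠] (0:ℝ)) (𝓝 0) :=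
    tendsto_id.mono_left nhdsWithin_le_nhds
  have hv1 : Tendsto v (𝓝[≠] 0) (𝓝 1) := by
    have h : Tendsto (fun t : ℝ => t • ((t : ℝ)⁻¹ • (v t - 1)) + 1) (𝓝[≠] 0)
        (𝓝 ((0:ℝ) • M + 1)) := (hid.smul hv).add tendsto_const_nhds
    rw [zero_smul, zero_add] at h
    refine h.congr' ?_
    filter_upwards [self_mem_nhdsWithin] with t ht
    rw [smul_smul, mul_inv_cancel₀ ht, one_smul, sub_add_cancel]
  have hw1 : Tendsto w (𝓝[≠] 0) (𝓝 1) := by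
    have h : Tendsto (fun t : ℝ => t • ((t : ℝ)⁻¹ • (w t - 1)) + 1) (𝓝[≠] 0)
        (𝓝 ((0:ℝ) • N + 1)) := (hid.smul hw).add tendsto_const_nhds
    rw [zero_smul, zero_add] at h
    refine h.congr' ?_
    filter_upwards [self_mem_nhdsWithin] with t ht
    rw [smul_smul, mul_inv_cancel₀ ht, one_smul, sub_add_cancel]
  have hcA : Tendsto (fun _ : ℝ => A) (𝓝[≠] 0) (𝓝 A) := tendsto_const_nhds
  have h := (((hv1.mul hf).mul hw1).add ((hv.mul hcA).mul hw1)).add (hcA.mul hw)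
  have heq : ∀ t : ℝ,
      v t * ((t : ℝ)⁻¹ • (f t - A)) * w t + ((t : ℝ)⁻¹ • (v t - 1)) * A * w t
        + A * ((t : ℝ)⁻¹ • (w t - 1))
      = (t : ℝ)⁻¹ • (v t * f t * w t - A) := by
    intro t
    rw [mul_smul_comm, smul_mul_assoc, smul_mul_assoc, smul_mul_assoc, mul_smul_comm,
      ← smul_add, ← smul_add]
    congr 1
    noncomm_ring
  have hlim : (1:B) * L * 1 + M * A * 1 + A * N = L + M * A + A * N := by
    simp
  rw [hlim] at h
  exact h.congr heq

/-- If `u` is the differentiable α-cocycle with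
`(d/dt) u t |_{t=0} = i P`, then the generator of the perturbed flow
`β t A = u t * α t A * (u t)⁻¹` has the same domain as the generator `δ` of
`α` and equals `δ + ad(iP)`, i.e. `δ̃ A = δ A + i (P A − A P)`. -/
theorem generator_of_inner_perturbation
    {B : Type*} [NormedRing B] [NormedAlgebra ℂ B] [CompleteSpace B]
    (α : ℝ → B →L[ℂ] B)
    (hα_one : ∀ t, α t 1 = 1)
    (hα_mul : ∀ t (x y : B), α t (x * y) = α t x * α t y)
    (hα_grp : ∀ s t (x : B), α (s + t) x = α s (α t x))
    (hα_zero : ∀ x : B, α 0 x = x)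
    (hα_cont : ∀ x : B, Continuous fun t => α t x)
    (P : B) (u uinv : ℝ → B)
    (hu_zero : u 0 = 1)
    (hu_inv : ∀ t, u t * uinv t = 1 ∧ uinv t * u t = 1)
    (hu_coc : ∀ s t : ℝ, u (t + s) = u t * α t (u s))
    (hu_deriv : ∀ t : ℝ, HasDerivAt u (Complex.I • (u t * α t P)) t) :
    (∀ A : B,
      (∃ L : B, Tendsto (fun t : ℝ => (t : ℝ)⁻¹ • (α t A - A))
          (𝓝[≠] 0) (𝓝 L)) ↔
      (∃ L' : B, Tendsto (fun t : ℝ => (t : ℝ)⁻¹ • (u t * α t A * uinv t - A))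
          (𝓝[≠] 0) (𝓝 L'))) ∧
    (∀ (A L : B),
      Tendsto (fun t : ℝ => (t : ℝ)⁻¹ • (α t A - A)) (𝓝[≠] 0) (𝓝 L) →
      Tendsto (fun t : ℝ => (t : ℝ)⁻¹ • (u t * α t A * uinv t - A))
        (𝓝[≠] 0) (𝓝 (L + Complex.I • (P * A - A * P)))) := by
  -- derivative of `u` at `0` is `I • P`
  have h0 : HasDerivAt u (Complex.I • P) 0 := by
    have := hu_deriv 0
    rwa [hu_zero, hα_zero, one_mul] at this
  have hM : Tendsto (fun t : ℝ => (t : ℝ)⁻¹ • (u t - 1)) (𝓝[≠] 0)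
      (𝓝 (Complex.I • P)) := by
    have h := hasDerivAt_iff_tendsto_slope.mp h0
    refine h.congr fun t => ?_
    simp [slope_def_module, hu_zero]
  -- continuity of `u` and `uinv` at `0`
  have hu_cont0 : Tendsto u (𝓝 (0 : ℝ)) (𝓝 1) := by
    have := h0.continuousAt.tendsto
    rwa [hu_zero] at this
  have huinv_eq : ∀ t, uinv t = Ring.inverse (u t) := by
    intro t
    exact (Ring.inverse_unit ⟨u t, uinv t, (hu_inv t).1, (hu_inv t).2⟩).symm
  have huinv_cont : Tendsto uinv (𝓝 (0 : ℝ)) (𝓝 1) := by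
    have hcont : ContinuousAt Ring.inverse ((1 : Bˣ) : B) :=
      NormedRing.inverse_continuousAt (1 : Bˣ)
    have := hcont.tendsto.comp hu_cont0
    simp only [Units.val_one, Ring.inverse_one] at this
    refine this.congr fun t => ?_
    simp [huinv_eq t, Function.comp]
  have hN : Tendsto (fun t : ℝ => (t : ℝ)⁻¹ • (uinv t - 1)) (𝓝[≠] 0)
      (𝓝 (-(Complex.I • P))) := by
    have h := ((huinv_cont.mono_left nhdsWithin_le_nhds).mul hM).neg
    rw [one_mul] at h
    refine h.congr fun t => ?_
    rw [mul_smul_comm, mul_sub, mul_one, (hu_inv t).2, ← smul_neg, neg_sub]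
  -- part 2
  have part2 : ∀ (A L : B),
      Tendsto (fun t : ℝ => (t : ℝ)⁻¹ • (α t A - A)) (𝓝[≠] 0) (𝓝 L) →
      Tendsto (fun t : ℝ => (t : ℝ)⁻¹ • (u t * α t A * uinv t - A))
        (𝓝[≠] 0) (𝓝 (L + Complex.I • (P * A - A * P))) := by
    intro A L hL
    have h := key_conj u uinv (fun t => α t A) A (Complex.I • P) (-(Complex.I • P)) L
      hM hN hL
    have hval : L + (Complex.I • P) * A + A * -(Complex.I • P)
        = L + Complex.I • (P * A - A * P) := by
      rw [smul_mul_assoc, mul_neg, mul_smul_comm, smul_sub]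
      abel
    rwa [hval] at h
  refine ⟨fun A => ⟨?_, ?_⟩, part2⟩
  · rintro ⟨L, hL⟩
    exact ⟨L + Complex.I • (P * A - A * P), part2 A L hL⟩
  · rintro ⟨L', hL'⟩
    have h := key_conj uinv u (fun t => u t * α t A * uinv t) A
      (-(Complex.I • P)) (Complex.I • P) L' hN hM hL'
    refine ⟨L' + -(Complex.I • P) * A + A * (Complex.I • P), h.congr fun t => ?_⟩
    congr 1
    have h2 := (hu_inv t).2
    have e1 : uinv t * (u t * α t A * uinv t) * u t
        = (uinv t * u t) * α t A * (uinv t * u t) := by noncomm_ring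
    rw [e1, h2, one_mul, mul_one]
end

section
/- Let α be a flow on a unital Banach algebra B with generator δ and P ∈ B. Then ‖u^P_t·α_t(A)·(u^P_t)⁻¹ − α_t(A)‖ ≤ C_t·(e^{M|t|‖P‖} − 1)·‖A‖ for a constant C_t depending only on M, ξ, t, where ‖α_t‖ ≤ M·e^{ξ|t|}; in particular the perturbed flow α^P_t = Ad u^P_t ∘ α_t satisfies ‖α^P_t − α_t‖ → 0 as t → 0 at rate O(|t|). -/
open Filter Topology MeasureTheory intervalIntegral

/-- For the Dyson α-cocycle `u = u^P` one has
`‖u t * α t A * (u t)⁻¹ − α t A‖ ≤ C t * (e^{M|t|‖P‖} − 1) * ‖A‖` for a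
constant `C t` depending only on `M, ξ, t`; in particular
`‖α^P_t − α_t‖ = O(|t|)` as `t → 0`. -/
theorem perturbed_flow_close_to_flow
    {B : Type*} [NormedRing B] [NormedAlgebra ℂ B] [CompleteSpace B]
    (α : ℝ → B →L[ℂ] B)
    (hα_one : ∀ t, α t 1 = 1)
    (hα_mul : ∀ t (x y : B), α t (x * y) = α t x * α t y)
    (hα_grp : ∀ s t (x : B), α (s + t) x = α s (α t x))
    (hα_zero : ∀ x : B, α 0 x = x)
    (hα_cont : ∀ x : B, Continuous fun t => α t x)
    (M ξ : ℝ) (hM : 1 ≤ M) (hξ : 0 ≤ ξ)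
    (hα_bdd : ∀ t : ℝ, ‖α t‖ ≤ M * Real.exp (ξ * |t|))
    (P : B) (u uinv : ℝ → B) (hu_cont : Continuous u)
    (hu_eq : ∀ t : ℝ, u t = 1 + Complex.I • ∫ s in (0:ℝ)..t, u s * α s P)
    (hu_inv : ∀ t, u t * uinv t = 1 ∧ uinv t * u t = 1) :
    (∃ C : ℝ → ℝ, ∀ (t : ℝ) (A : B),
      ‖u t * α t A * uinv t - α t A‖
        ≤ C t * (Real.exp (M * |t| * ‖P‖) - 1) * ‖A‖) ∧
    (∃ K ε : ℝ, 0 < ε ∧ 0 ≤ K ∧ ∀ t : ℝ, |t| < ε → ∀ A : B,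
      ‖u t * α t A * uinv t - α t A‖ ≤ K * |t| * ‖A‖) := by
  have hMpos : (0:ℝ) < M := lt_of_lt_of_le one_pos hM
  -- degenerate facts
  have hu0 : u 0 = 1 := by
    have := hu_eq 0
    simpa using this
  have huinv0 : uinv 0 = 1 := by
    have h := (hu_inv 0).1
    rw [hu0, one_mul] at h
    exact h
  have hP0 : P = 0 → ∀ t, u t = 1 ∧ uinv t = 1 := by
    intro hP t
    have hu1 : u t = 1 := by
      have := hu_eq t
      simpa [hP] using this
    refine ⟨hu1, ?_⟩
    have h := (hu_inv t).1
    rw [hu1, one_mul] at h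
    exact h
  constructor
  · refine ⟨fun t => if Real.exp (M * |t| * ‖P‖) - 1 = 0 then 0
      else (‖u t‖ * ‖α t‖ * ‖uinv t‖ + ‖α t‖) / (Real.exp (M * |t| * ‖P‖) - 1), ?_⟩
    intro t A
    by_cases hg : Real.exp (M * |t| * ‖P‖) - 1 = 0
    · have hexp1 : Real.exp (M * |t| * ‖P‖) = 1 := by linarith
      have h0 : M * |t| * ‖P‖ = 0 := by
        have := congrArg Real.log hexp1
        simpa [Real.log_exp] using this
      have hlhs : u t * α t A * uinv t - α t A = 0 := by
        rcases mul_eq_zero.mp h0 with h | hPn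
        · rcases mul_eq_zero.mp h with hM0 | ht0
          · exact absurd hM0 (ne_of_gt hMpos)
          · have ht : t = 0 := abs_eq_zero.mp ht0
            subst ht
            rw [hu0, huinv0, one_mul, mul_one, sub_self]
        · have hP : P = 0 := norm_eq_zero.mp hPn
          obtain ⟨h1, h2⟩ := hP0 hP t
          rw [h1, h2, one_mul, mul_one, sub_self]
      simp [hg, hlhs]
    · simp only [if_neg hg]
      rw [div_mul_cancel₀ _ hg]
      have h1 : ‖u t * α t A * uinv t - α t A‖
          ≤ ‖u t * α t A * uinv t‖ + ‖α t A‖ := norm_sub_le _ _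
      have h2 : ‖u t * α t A * uinv t‖ ≤ ‖u t‖ * ‖α t A‖ * ‖uinv t‖ :=
        le_trans (norm_mul_le _ _) (by gcongr; exact norm_mul_le _ _)
      have h3 : ‖α t A‖ ≤ ‖α t‖ * ‖A‖ := (α t).le_opNorm A
      have h4 : (0:ℝ) ≤ ‖u t‖ * ‖uinv t‖ := by positivity
      nlinarith [norm_nonneg (u t), norm_nonneg (uinv t), norm_nonneg (α t),
        norm_nonneg A, norm_nonneg (α t A)]
  · -- quantitative part near 0
    obtain ⟨U, hU⟩ := (isCompact_Icc : IsCompact (Set.Icc (-1:ℝ) 1)).exists_bound_of_continuousOn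
      hu_cont.continuousOn
    set U' := max U 1 with hU'
    have hU'1 : (1:ℝ) ≤ U' := le_max_right _ _
    have hU'pos : (0:ℝ) < U' := lt_of_lt_of_le one_pos hU'1
    set c := U' * (M * Real.exp ξ) * ‖P‖ with hc
    have hcnn : 0 ≤ c := by positivity
    -- bound on u t - 1 for |t| ≤ 1
    have key : ∀ t : ℝ, |t| ≤ 1 → ‖u t - 1‖ ≤ c * |t| := by
      intro t ht
      have heq : u t - 1 = Complex.I • ∫ s in (0:ℝ)..t, u s * α s P := by
        rw [hu_eq t, add_sub_cancel_left]
      rw [heq, norm_smul]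
      simp only [Complex.norm_I, one_mul]
      have hb : ∀ s ∈ Set.uIoc (0:ℝ) t, ‖u s * α s P‖ ≤ c := by
        intro s hs
        have hs1 : |s| ≤ 1 := by
          rcases Set.mem_uIoc.mp hs with ⟨h1, h2⟩ | ⟨h1, h2⟩
          · rw [abs_le]; constructor <;> [linarith [abs_nonneg t]; exact le_trans h2 (le_trans (le_abs_self t) ht)]
          · rw [abs_le]
            constructor
            · have : -|t| ≤ t := neg_abs_le t
              linarith
            · linarith [abs_nonneg t]
        have hu_s : ‖u s‖ ≤ U' := le_trans (hU s (abs_le.mp hs1 |> fun h => Set.mem_Icc.mpr h)) (le_max_left _ _)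
        have hα_s : ‖α s‖ ≤ M * Real.exp ξ := by
          refine le_trans (hα_bdd s) (mul_le_mul_of_nonneg_left ?_ hMpos.le)
          exact Real.exp_le_exp.mpr (mul_le_of_le_one_right hξ hs1)
        calc ‖u s * α s P‖ ≤ ‖u s‖ * ‖α s P‖ := norm_mul_le _ _
          _ ≤ ‖u s‖ * (‖α s‖ * ‖P‖) := by gcongr; exact (α s).le_opNorm P
          _ ≤ U' * ((M * Real.exp ξ) * ‖P‖) :=
              mul_le_mul hu_s (mul_le_mul_of_nonneg_right hα_s (norm_nonneg P))
                (by positivity) hU'pos.le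
          _ = c := by rw [hc]; ring
      have := intervalIntegral.norm_integral_le_of_norm_le_const hb
      simpa [abs_sub_comm] using this
    set ε := min 1 (1 / (2 * (c + 1))) with hε
    have hεpos : 0 < ε := lt_min one_pos (by positivity)
    set N := ‖(1:B)‖ with hN
    have hNnn : 0 ≤ N := norm_nonneg _
    refine ⟨4 * (c * N) * (M * Real.exp ξ), ε, hεpos, by positivity, ?_⟩
    intro t ht A
    have ht1 : |t| ≤ 1 := le_of_lt (lt_of_lt_of_le ht (min_le_left _ _))
    have hsmall : ‖u t - 1‖ ≤ 1 / 2 := by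
      have h1 := key t ht1
      have h2 : |t| ≤ 1 / (2 * (c + 1)) := le_of_lt (lt_of_lt_of_le ht (min_le_right _ _))
      have : c * |t| ≤ c * (1 / (2 * (c + 1))) := by
        apply mul_le_mul_of_nonneg_left h2 hcnn
      have h3 : c * (1 / (2 * (c + 1))) ≤ 1 / 2 := by
        rw [mul_one_div, div_le_div_iff₀ (by positivity) (by norm_num)]
        nlinarith
      linarith
    have hvinv : ‖uinv t‖ ≤ 2 * N := by
      have hid : uinv t - 1 = uinv t * (1 - u t) := by
        rw [mul_sub, mul_one, (hu_inv t).2]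
      have h1 : ‖uinv t‖ - N ≤ ‖uinv t - 1‖ := by
        have := norm_sub_norm_le (uinv t) 1
        simpa [hN] using this
      have h2 : ‖uinv t - 1‖ ≤ ‖uinv t‖ * ‖1 - u t‖ := by
        rw [hid]; exact norm_mul_le _ _
      have h3 : ‖(1:B) - u t‖ ≤ 1 / 2 := by rw [norm_sub_rev]; exact hsmall
      nlinarith [norm_nonneg (uinv t)]
    have hvinv1 : ‖uinv t - 1‖ ≤ 2 * N * (c * |t|) := by
      have hid : uinv t - 1 = uinv t * (1 - u t) := by
        rw [mul_sub, mul_one, (hu_inv t).2]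
      calc ‖uinv t - 1‖ = ‖uinv t * (1 - u t)‖ := by rw [hid]
        _ ≤ ‖uinv t‖ * ‖1 - u t‖ := norm_mul_le _ _
        _ ≤ 2 * N * (c * |t|) := by
            refine mul_le_mul hvinv ?_ (norm_nonneg _) (by positivity)
            rw [norm_sub_rev]; exact key t ht1
    have hαA : ‖α t A‖ ≤ M * Real.exp ξ * ‖A‖ := by
      have hα_t : ‖α t‖ ≤ M * Real.exp ξ := by
        refine le_trans (hα_bdd t) (mul_le_mul_of_nonneg_left ?_ hMpos.le)
        exact Real.exp_le_exp.mpr (mul_le_of_le_one_right hξ ht1)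
      calc ‖α t A‖ ≤ ‖α t‖ * ‖A‖ := (α t).le_opNorm A
        _ ≤ M * Real.exp ξ * ‖A‖ := mul_le_mul_of_nonneg_right hα_t (norm_nonneg A)
    have hid2 : u t * α t A * uinv t - α t A
        = (u t - 1) * (α t A * uinv t) + α t A * (uinv t - 1) := by noncomm_ring
    have hub : ‖u t - 1‖ ≤ c * |t| := key t ht1
    calc ‖u t * α t A * uinv t - α t A‖
        = ‖(u t - 1) * (α t A * uinv t) + α t A * (uinv t - 1)‖ := by rw [hid2]
      _ ≤ ‖(u t - 1) * (α t A * uinv t)‖ + ‖α t A * (uinv t - 1)‖ := norm_add_le _ _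
      _ ≤ ‖u t - 1‖ * (‖α t A‖ * ‖uinv t‖) + ‖α t A‖ * ‖uinv t - 1‖ := by
          gcongr
          · exact le_trans (norm_mul_le _ _) (by gcongr; exact norm_mul_le _ _)
          · exact norm_mul_le _ _
      _ ≤ (c * |t|) * (M * Real.exp ξ * ‖A‖ * (2 * N)) + (M * Real.exp ξ * ‖A‖) * (2 * N * (c * |t|)) := by
          gcongr <;> first
            | exact hub | exact hαA | exact hvinv | exact hvinv1
            | positivity
      _ = 4 * (c * N) * (M * Real.exp ξ) * |t| * ‖A‖ := by ring
end

section
/- Let α be a flow on a Banach algebra B with ‖α_t‖ ≤ M·e^{ξ|t|}. For A ∈ B define f_n(z) = √(n/π)·∫_ℝ α_t(A)·e^{−n(t−z)² − ξ(t−z)} dt for z ∈ ℂ. Then f_n is well defined, f_n(s) = α_s(A_n) for all real s (where A_n = f_n(0)), and for every bounded linear functional η on B the function z ↦ η(f_n(z)) is entire. In particular each A_n is an analytic element for α. -/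
open Filter Topology MeasureTheory Real

/-!
Expanding the square, the integrand at `z` is `e^{-nz² + ξz} e^{2nzt} g(t)` with
`g(t) = e^{-nt² - ξt} α_t(A)`, and `‖g(t)‖ ≤ M‖A‖ e^{-nt² + 2|ξ||t|}`. Hence `f` is an entire
factor times the two-sided Laplace transform of a function with Gaussian decay, which is entire
by differentiation under the integral sign. The covariance `f(s) = α_s(f(0))` is translation
invariance of Lebesgue measure combined with the group law `α_{s+t} = α_s α_t`.
-/

theorem integrable_exp_neg_mul_sq_add_mul_abs {a : ℝ} (ha : 0 < a) (b : ℝ) :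
    Integrable fun t : ℝ => exp (-a * t ^ 2 + b * |t|) := by
  refine ((integrable_exp_neg_mul_sq (half_pos ha)).const_mul (exp (b ^ 2 / (2 * a)))).mono'
    (by fun_prop : Continuous fun t : ℝ => exp (-a * t ^ 2 + b * |t|)).aestronglyMeasurable
    (Eventually.of_forall fun t => ?_)
  -- complete the square: `b²/(2a) - (a/2) t² - (-a t² + b|t|) = (a|t| - b)²/(2a)`
  have hsq : -a * t ^ 2 + b * |t| ≤ b ^ 2 / (2 * a) + -(a / 2) * t ^ 2 := by
    have key : b ^ 2 / (2 * a) + -(a / 2) * t ^ 2 - (-a * t ^ 2 + b * |t|)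
        = (a * |t| - b) ^ 2 / (2 * a) := by
      field_simp
      rw [← sq_abs t]
      ring
    linarith [key, div_nonneg (sq_nonneg (a * |t| - b)) (by positivity : (0:ℝ) ≤ 2 * a)]
  rw [norm_of_nonneg (exp_pos _).le, ← exp_add]
  exact exp_le_exp.mpr hsq

theorem norm_cexp_mul_ofReal_le (z : ℂ) (t : ℝ) :
    ‖Complex.exp (z * t)‖ ≤ exp (|z.re| * |t|) := by
  rw [Complex.norm_exp, Complex.re_mul_ofReal, ← abs_mul]
  exact exp_le_exp.mpr (le_abs_self _)

section GaussianDecay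

variable {E : Type*} [NormedAddCommGroup E] [NormedSpace ℂ E] {g : ℝ → E} {a b C : ℝ}

theorem norm_cexp_mul_smul_le (hg : ∀ t, ‖g t‖ ≤ C * exp (-a * t ^ 2 + b * |t|)) (z : ℂ) (t : ℝ) :
    ‖Complex.exp (z * t) • g t‖ ≤ C * exp (-a * t ^ 2 + (b + |z.re|) * |t|) := by
  rw [norm_smul]
  calc ‖Complex.exp (z * t)‖ * ‖g t‖ ≤ exp (|z.re| * |t|) * (C * exp (-a * t ^ 2 + b * |t|)) :=
        mul_le_mul (norm_cexp_mul_ofReal_le z t) (hg t) (norm_nonneg _) (exp_pos _).le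
    _ = C * exp (-a * t ^ 2 + (b + |z.re|) * |t|) := by
        rw [mul_left_comm, ← exp_add]; ring_nf

theorem integrable_cexp_mul_smul (hg_meas : AEStronglyMeasurable g) (ha : 0 < a)
    (hg : ∀ t, ‖g t‖ ≤ C * exp (-a * t ^ 2 + b * |t|)) (z : ℂ) :
    Integrable fun t : ℝ => Complex.exp (z * t) • g t :=
  ((integrable_exp_neg_mul_sq_add_mul_abs ha _).const_mul C).mono'
    ((by fun_prop : Continuous fun t : ℝ => Complex.exp (z * t)).aestronglyMeasurable.smul hg_meas)
    (Eventually.of_forall (norm_cexp_mul_smul_le hg z))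

theorem differentiable_integral_cexp_mul_smul [CompleteSpace E] (hg_meas : AEStronglyMeasurable g)
    (ha : 0 < a) (hg : ∀ t, ‖g t‖ ≤ C * exp (-a * t ^ 2 + b * |t|)) :
    Differentiable ℂ fun z : ℂ => ∫ t : ℝ, Complex.exp (z * t) • g t := by
  intro z₀
  have hC : 0 ≤ C := by simpa using (norm_nonneg _).trans (hg 0)
  have h_deriv : ∀ (t : ℝ) (z : ℂ), HasDerivAt (fun z : ℂ => Complex.exp (z * t) • g t)
      ((t * Complex.exp (z * t)) • g t) z := fun t z => by
    simpa [mul_comm] using (((hasDerivAt_id z).mul_const (t : ℂ)).cexp).smul_const (g t)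
  have h_bound : ∀ t : ℝ, ∀ z ∈ Metric.ball z₀ 1, ‖(t * Complex.exp (z * t)) • g t‖
      ≤ C * exp (-a * t ^ 2 + (b + |z₀.re| + 2) * |t|) := fun t z hz => by
    have hre : |z.re| ≤ |z₀.re| + 1 := by
      have := (Complex.abs_re_le_norm (z - z₀)).trans (mem_ball_iff_norm.mp hz).le
      rw [Complex.sub_re] at this
      linarith [abs_sub_abs_le_abs_sub z.re z₀.re]
    rw [mul_smul, norm_smul, Complex.norm_real, norm_eq_abs]
    calc |t| * ‖Complex.exp (z * t) • g t‖
        ≤ exp |t| * (C * exp (-a * t ^ 2 + (b + |z.re|) * |t|)) :=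
          mul_le_mul ((le_add_of_nonneg_right zero_le_one).trans (add_one_le_exp _))
            (norm_cexp_mul_smul_le hg z t) (norm_nonneg _) (exp_pos _).le
      _ = C * exp (-a * t ^ 2 + (b + |z.re| + 1) * |t|) := by
          rw [mul_left_comm, ← exp_add]; ring_nf
      _ ≤ C * exp (-a * t ^ 2 + (b + |z₀.re| + 2) * |t|) := by
          gcongr _ * exp (_ + ?_)
          exact mul_le_mul_of_nonneg_right (by linarith) (abs_nonneg t)
  exact (hasDerivAt_integral_of_dominated_loc_of_deriv_le (Metric.ball_mem_nhds z₀ one_pos)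
    (Eventually.of_forall fun z => (integrable_cexp_mul_smul hg_meas ha hg z).aestronglyMeasurable)
    (integrable_cexp_mul_smul hg_meas ha hg z₀)
    ((by fun_prop : Continuous fun t : ℝ => (t * Complex.exp (z₀ * t) : ℂ)).aestronglyMeasurable.smul
      hg_meas)
    (Eventually.of_forall h_bound)
    ((integrable_exp_neg_mul_sq_add_mul_abs ha _).const_mul C)
    (Eventually.of_forall fun t z _ => h_deriv t z)).2.differentiableAt

end GaussianDecay

theorem norm_cexp_neg_mul_sq_sub_mul_smul_le {E : Type*} [NormedAddCommGroup E]
    [NormedSpace ℂ E] {x : E} {a ξ K t : ℝ} (hx : ‖x‖ ≤ K * exp (ξ * |t|)) :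
    ‖Complex.exp (-(a : ℂ) * t ^ 2 - ξ * t) • x‖ ≤ K * exp (-a * t ^ 2 + 2 * |ξ| * |t|) := by
  have hK : 0 ≤ K := nonneg_of_mul_nonneg_left ((norm_nonneg x).trans hx) (exp_pos _)
  have hexp : -(a : ℂ) * t ^ 2 - ξ * t = ((-a * t ^ 2 - ξ * t : ℝ) : ℂ) := by push_cast; ring
  rw [norm_smul, hexp, Complex.norm_exp_ofReal]
  calc exp (-a * t ^ 2 - ξ * t) * ‖x‖ ≤ exp (-a * t ^ 2 - ξ * t) * (K * exp (ξ * |t|)) :=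
        mul_le_mul_of_nonneg_left hx (exp_pos _).le
    _ = K * exp (-a * t ^ 2 - ξ * t + ξ * |t|) := by rw [exp_add]; ring
    _ ≤ K * exp (-a * t ^ 2 + 2 * |ξ| * |t|) := by
        have h₁ : -(ξ * t) ≤ |ξ| * |t| := abs_mul ξ t ▸ neg_le_abs _
        have h₂ : ξ * |t| ≤ |ξ| * |t| := mul_le_mul_of_nonneg_right (le_abs_self ξ) (abs_nonneg t)
        gcongr K * exp ?_
        linarith

theorem cexp_neg_mul_sq_sub_mul_sub (a b z w : ℂ) :
    Complex.exp (-a * (w - z) ^ 2 - b * (w - z)) = Complex.exp (-a * z ^ 2 + b * z) *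
      (Complex.exp (2 * a * z * w) * Complex.exp (-a * w ^ 2 - b * w)) := by
  rw [← Complex.exp_add, ← Complex.exp_add]
  ring_nf

theorem integral_smul_apply_comp_sub {E : Type*} [NormedAddCommGroup E] [NormedSpace ℂ E]
    [CompleteSpace E] (α : ℝ → E →L[ℂ] E) (hα_grp : ∀ s t (x : E), α (s + t) x = α s (α t x))
    (k : ℝ → ℂ) (x : E) (hk : Integrable fun t => k t • α t x) (s : ℝ) :
    ∫ t, k (t - s) • α t x = α s (∫ t, k t • α t x) := by
  rw [← ContinuousLinearMap.integral_comp_comm _ hk, ← integral_add_right_eq_self _ s]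
  simp_rw [add_sub_cancel_right, add_comm _ s, hα_grp, map_smul]

theorem gaussian_regularization_analytic_general
    {B : Type*} [NormedRing B] [NormedAlgebra ℂ B] [CompleteSpace B]
    (α : ℝ → B →L[ℂ] B)
    (hα_grp : ∀ s t (x : B), α (s + t) x = α s (α t x))
    (hα_cont : ∀ x : B, Continuous fun t => α t x)
    (M ξ : ℝ)
    (hα_bdd : ∀ t : ℝ, ‖α t‖ ≤ M * Real.exp (ξ * |t|))
    (A : B) (n : ℕ) (hn : 1 ≤ n)
    (f : ℂ → B)
    (hf : ∀ z : ℂ, f z = Real.sqrt (n / π) •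
      ∫ t : ℝ, Complex.exp (-(n : ℂ) * ((t : ℂ) - z) ^ 2
        - (ξ : ℂ) * ((t : ℂ) - z)) • α t A) :
    (∀ z : ℂ, Integrable fun t : ℝ =>
      Complex.exp (-(n : ℂ) * ((t : ℂ) - z) ^ 2
        - (ξ : ℂ) * ((t : ℂ) - z)) • α t A) ∧
    (∀ s : ℝ, f s = α s (f 0)) ∧
    (∀ η : B →L[ℂ] ℂ, Differentiable ℂ fun z : ℂ => η (f z)) ∧
    (∃ g : ℂ → B, Differentiable ℂ g ∧ ∀ t : ℝ, g t = α t (f 0)) := by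
  have hn₀ : (0 : ℝ) < n := by exact_mod_cast hn
  set g : ℝ → B := fun t => Complex.exp (-(n : ℂ) * t ^ 2 - ξ * t) • α t A
  have hg_meas : AEStronglyMeasurable g :=
    ((by fun_prop : Continuous fun t : ℝ => Complex.exp (-(n : ℂ) * t ^ 2 - ξ * t)).smul
      (hα_cont A)).aestronglyMeasurable
  have hg_bound (t : ℝ) : ‖g t‖ ≤ M * ‖A‖ * exp (-n * t ^ 2 + 2 * |ξ| * |t|) :=
    norm_cexp_neg_mul_sq_sub_mul_smul_le <| ((α t).le_opNorm A).trans <| by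
      rw [mul_right_comm]; exact mul_le_mul_of_nonneg_right (hα_bdd t) (norm_nonneg A)
  have hfactor (z : ℂ) : (fun t : ℝ => Complex.exp (-(n : ℂ) * ((t : ℂ) - z) ^ 2
      - (ξ : ℂ) * ((t : ℂ) - z)) • α t A) = fun t : ℝ =>
        Complex.exp (-n * z ^ 2 + ξ * z) • (Complex.exp (2 * n * z * t) • g t) := by
    ext t
    rw [cexp_neg_mul_sq_sub_mul_sub, mul_smul, mul_smul]
  have hint (z : ℂ) : Integrable fun t : ℝ => Complex.exp (-(n : ℂ) * ((t : ℂ) - z) ^ 2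
      - (ξ : ℂ) * ((t : ℂ) - z)) • α t A := by
    rw [hfactor]
    exact (integrable_cexp_mul_smul hg_meas hn₀ hg_bound (2 * n * z)).smul
      (Complex.exp (-(n : ℂ) * z ^ 2 + ξ * z))
  have hdiff : Differentiable ℂ f := by
    have hL : Differentiable ℂ fun z : ℂ => ∫ t : ℝ, Complex.exp (2 * n * z * t) • g t :=
      (differentiable_integral_cexp_mul_smul hg_meas hn₀ hg_bound).comp
        (differentiable_id.const_mul _)
    rw [funext hf]
    simp_rw [hfactor, integral_smul]
    fun_prop
  have hcov (s : ℝ) : f s = α s (f 0) := by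
    rw [hf, hf, ContinuousLinearMap.map_smul_of_tower]
    simp only [sub_zero]
    rw [← integral_smul_apply_comp_sub α hα_grp (fun u => Complex.exp (-(n : ℂ) * u ^ 2 - ξ * u)) A
      (by simpa using hint 0)]
    simp only [Complex.ofReal_sub]
  exact ⟨hint, hcov, fun η => η.differentiable.comp hdiff, f, hdiff, hcov⟩

/-- For a flow `α` with `‖α t‖ ≤ M e^{ξ|t|}` and `A ∈ B`,
the function `f_n(z) = √(n/π) ∫ α_t(A) e^{-n(t-z)² - ξ(t-z)} dt` is well
defined (the integrand is Bochner integrable for every `z`), satisfies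
`f_n(s) = α_s (f_n 0)` for real `s`, and `z ↦ η (f_n z)` is entire for every
bounded functional `η`.  In particular `A_n = f_n 0` is an analytic element
for `α`. -/
theorem gaussian_regularization_analytic
    {B : Type*} [NormedRing B] [NormedAlgebra ℂ B] [CompleteSpace B]
    (α : ℝ → B →L[ℂ] B)
    (hα_mul : ∀ t (x y : B), α t (x * y) = α t x * α t y)
    (hα_grp : ∀ s t (x : B), α (s + t) x = α s (α t x))
    (hα_zero : ∀ x : B, α 0 x = x)
    (hα_cont : ∀ x : B, Continuous fun t => α t x)
    (M ξ : ℝ) (hM : 1 ≤ M) (hξ : 0 ≤ ξ)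
    (hα_bdd : ∀ t : ℝ, ‖α t‖ ≤ M * Real.exp (ξ * |t|))
    (A : B) (n : ℕ) (hn : 1 ≤ n)
    (f : ℂ → B)
    (hf : ∀ z : ℂ, f z = Real.sqrt (n / π) •
      ∫ t : ℝ, Complex.exp (-(n : ℂ) * ((t : ℂ) - z) ^ 2
        - (ξ : ℂ) * ((t : ℂ) - z)) • α t A) :
    (∀ z : ℂ, Integrable fun t : ℝ =>
      Complex.exp (-(n : ℂ) * ((t : ℂ) - z) ^ 2
        - (ξ : ℂ) * ((t : ℂ) - z)) • α t A) ∧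
    (∀ s : ℝ, f s = α s (f 0)) ∧
    (∀ η : B →L[ℂ] ℂ, Differentiable ℂ fun z : ℂ => η (f z)) ∧
    (∃ g : ℂ → B, Differentiable ℂ g ∧ ∀ t : ℝ, g t = α t (f 0)) :=
  gaussian_regularization_analytic_general α hα_grp hα_cont M ξ hα_bdd A n hn f hf
end
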